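/- arXiv:1107.2734 — 7 statements merged into one kernel-verified Lean document; each statement's English description precedes it below -/
import Mathlib

section
/- Let X be an n×p real matrix and s a subset of column indices such that X(s) has full column rank. If column X_l (l ∉ s) lies in the column span of X(s), then for any λ > 0, every minimizer β of the partially penalized criterion ‖y − Xβ‖₂² + λ·Σ_{j∉s}|β_j| satisfies β_l = 0. -/
open Matrix

theorem Matrix.exists_mulVec_eq_of_mem_span_cols {R m ι : Type*} [CommSemiring R] [Fintype ι]
    [DecidableEq ι] (X : Matrix m ι R) (s : Finset ι) {v : m → R}
    (hv : v ∈ Submodule.span R (Set.range fun j : {x // x ∈ s} => fun i => X i j.1)) :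
    ∃ c : ι → R, (∀ j ∉ s, c j = 0) ∧ X *ᵥ c = v := by
  have hle : Submodule.span R (Set.range fun j : {x // x ∈ s} => fun i => X i j.1) ≤
      (Submodule.pi (↑s)ᶜ fun _ => ⊥).map X.mulVecLin := by
    rw [Submodule.span_le]
    rintro _ ⟨j, rfl⟩
    refine ⟨Pi.single j 1, fun k hk => ?_, X.mulVec_single_one j⟩
    have hkj : k ≠ j := fun h => hk (h ▸ j.2)
    simp [hkj]
  obtain ⟨c, hc, rfl⟩ := hle hv
  exact ⟨c, fun j hj => by simpa using hc j hj, rfl⟩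

theorem Finset.sum_abs_update_zero_add {ι α : Type*} [DecidableEq ι] [AddCommGroup α]
    [LinearOrder α] [IsOrderedAddMonoid α] {T : Finset ι} {l : ι} (hl : l ∈ T) (β : ι → α) :
    ∑ j ∈ T, |Function.update β l 0 j| + |β l| = ∑ j ∈ T, |β j| := by
  rw [← Finset.add_sum_erase _ _ hl, ← Finset.add_sum_erase _ (fun j => |β j|) hl,
    Finset.sum_congr rfl fun j hj => by rw [Function.update_of_ne (Finset.ne_of_mem_erase hj)],
    Function.update_self, abs_zero, zero_add, add_comm]

theorem stmt0_general {n p : ℕ} (X : Matrix (Fin n) (Fin p) ℝ) (y : Fin n → ℝ)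
    (s : Finset (Fin p)) (l : Fin p)
    (hl : l ∉ s)
    (hspan : (fun i => X i l) ∈
      Submodule.span ℝ (Set.range (fun j : {x // x ∈ s} => fun i => X i j.1)))
    (lam : ℝ) (hlam : 0 < lam)
    (β : Fin p → ℝ)
    (hmin : ∀ γ : Fin p → ℝ,
      (∑ i, (y i - (X *ᵥ β) i) ^ 2) + lam * ∑ j ∈ sᶜ, |β j| ≤
      (∑ i, (y i - (X *ᵥ γ) i) ^ 2) + lam * ∑ j ∈ sᶜ, |γ j|) :
    β l = 0 := by
  obtain ⟨c, hc_supp, hc⟩ : ∃ c, (∀ j ∉ s, c j = 0) ∧ X *ᵥ c = X.col l :=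
    X.exists_mulVec_eq_of_mem_span_cols s hspan
  -- Moving the weight of column `l` onto the columns of `X(s)` keeps the fit and drops `|β l|`.
  set γ := β - β l • (Pi.single l 1 - c)
  have hfit : X *ᵥ γ = X *ᵥ β := by
    rw [mulVec_sub, mulVec_smul, mulVec_sub, X.mulVec_single_one, hc, sub_self, smul_zero,
      sub_zero]
  have hγ : ∀ j ∈ sᶜ, |γ j| = |Function.update β l 0 j| := by
    intro j hj
    have hcj := hc_supp j (Finset.mem_compl.mp hj)
    by_cases hjl : j = l
    · subst hjl; simp [γ, hcj]
    · simp [γ, hcj, hjl]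
  have hpen := Finset.sum_abs_update_zero_add (Finset.mem_compl.mpr hl) β
  have hγ_min := hmin γ
  rw [hfit, Finset.sum_congr rfl hγ, ← hpen, mul_add] at hγ_min
  have : lam * |β l| ≤ 0 := by linarith
  exact abs_nonpos_iff.mp (nonpos_of_mul_nonpos_right this hlam)

/-- if column `l ∉ s` of `X` lies in the span of the columns of `X(s)`
(which has full column rank), then any minimizer of the partially penalized
criterion `‖y − Xβ‖₂² + λ·∑_{j∉s}|β_j|` satisfies `β l = 0`. -/
theorem stmt0 {n p : ℕ} (X : Matrix (Fin n) (Fin p) ℝ) (y : Fin n → ℝ)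
    (s : Finset (Fin p)) (l : Fin p)
    (hrank : LinearIndependent ℝ (fun j : {x // x ∈ s} => fun i => X i j.1))
    (hl : l ∉ s)
    (hspan : (fun i => X i l) ∈
      Submodule.span ℝ (Set.range (fun j : {x // x ∈ s} => fun i => X i j.1)))
    (lam : ℝ) (hlam : 0 < lam)
    (β : Fin p → ℝ)
    (hmin : ∀ γ : Fin p → ℝ,
      (∑ i, (y i - (X *ᵥ β) i) ^ 2) + lam * ∑ j ∈ sᶜ, |β j| ≤
      (∑ i, (y i - (X *ᵥ γ) i) ^ 2) + lam * ∑ j ∈ sᶜ, |γ j|) :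
    β l = 0 :=
  stmt0_general X y s l hl hspan lam hlam β hmin
end

section
/- Let X be an n×p real matrix, y ∈ ℝⁿ, and s a subset of column indices with X(s) of full column rank. Let H(s) = X(s)(X(s)ᵀX(s))⁻¹X(s)ᵀ be the orthogonal projection onto the column span of X(s). Then minimizing ‖y − Xβ‖₂² + λΣ_{j∉s}|β_j| over β is equivalent to minimizing ‖(I − H(s))(y − X(sᶜ)β(sᶜ))‖₂² + λΣ_{j∉s}|β_j| over β(sᶜ): the minimum values coincide, and for any minimizing β(sᶜ), the optimal β(s) is given by β̂(s) = (X(s)ᵀX(s))⁻¹X(s)ᵀ(y − X(sᶜ)β(sᶜ)). -/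
open Matrix

/-!
Splitting `Xβ = X(s)β(s) + X(sᶜ)β(sᶜ)`, the `β(s)`-part of the objective is a least-squares
problem in `β(s)` with residual `r = y − X(sᶜ)β(sᶜ)`. Since `X(s)ᵀ(I − H(s)) = 0`, Pythagoras gives
`‖r − X(s)v‖² = ‖(I − H(s))r‖² + ‖X(s)(v̂ − v)‖²` with `v̂ = (X(s)ᵀX(s))⁻¹X(s)ᵀr`, so the
reduced objective is a pointwise lower bound of the full one which is attained at `β(s) = v̂`.
-/

theorem Real.sInf_range_eq_of_le_of_comp {α : Type*} [Nonempty α] {F G : α → ℝ}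
    (hle : ∀ β, G β ≤ F β) (c : α → α) (hc : ∀ β, F (c β) = G β) :
    sInf (Set.range F) = sInf (Set.range G) := by
  have hGF : Set.range G ⊆ Set.range F := by
    rintro _ ⟨β, rfl⟩
    exact ⟨c β, hc β⟩
  by_cases hF : BddBelow (Set.range F)
  · have hG : BddBelow (Set.range G) := hF.mono hGF
    refine le_antisymm (csInf_le_csInf hF (Set.range_nonempty G) hGF) ?_
    refine le_csInf (Set.range_nonempty F) ?_
    rintro _ ⟨γ, rfl⟩
    exact (csInf_le hG ⟨γ, rfl⟩).trans (hle γ)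
  · have hG : ¬BddBelow (Set.range G) := by
      rintro ⟨b, hb⟩
      refine hF ⟨b, ?_⟩
      rintro _ ⟨γ, rfl⟩
      exact (hb ⟨γ, rfl⟩).trans (hle γ)
    rw [Real.sInf_of_not_bddBelow hF, Real.sInf_of_not_bddBelow hG]

namespace Matrix

section LeastSquares

variable {m k : Type*} [Fintype m] [Fintype k] [DecidableEq k] (B : Matrix m k ℝ)

theorem isUnit_transpose_mul_self_of_linearIndependent_col (h : LinearIndependent ℝ B.col) :
    IsUnit (Bᵀ * B) := by
  simpa using (PosDef.conjTranspose_mul_self B (mulVec_injective_iff.mpr h)).isUnit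

variable {B} [DecidableEq m]

theorem transpose_mulVec_one_sub_proj (hB : IsUnit (Bᵀ * B)) (r : m → ℝ) :
    Bᵀ *ᵥ ((1 - B * (Bᵀ * B)⁻¹ * Bᵀ) *ᵥ r) = 0 := by
  have hinv : Bᵀ * B * (Bᵀ * B)⁻¹ = 1 := mul_nonsing_inv _ ((isUnit_iff_isUnit_det _).mp hB)
  rw [mulVec_mulVec, Matrix.mul_sub, Matrix.mul_one, ← Matrix.mul_assoc, ← Matrix.mul_assoc, hinv,
    Matrix.one_mul, sub_self, zero_mulVec]

theorem sub_mulVec_leastSquares (r : m → ℝ) :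
    r - B *ᵥ (((Bᵀ * B)⁻¹ * Bᵀ) *ᵥ r) = (1 - B * (Bᵀ * B)⁻¹ * Bᵀ) *ᵥ r := by
  rw [mulVec_mulVec, sub_mulVec, one_mulVec, Matrix.mul_assoc]

theorem dotProduct_self_sub_mulVec_eq (hB : IsUnit (Bᵀ * B)) (r : m → ℝ) (v : k → ℝ) :
    (r - B *ᵥ v) ⬝ᵥ (r - B *ᵥ v) =
      ((1 - B * (Bᵀ * B)⁻¹ * Bᵀ) *ᵥ r) ⬝ᵥ ((1 - B * (Bᵀ * B)⁻¹ * Bᵀ) *ᵥ r) +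
        (B *ᵥ (((Bᵀ * B)⁻¹ * Bᵀ) *ᵥ r - v)) ⬝ᵥ (B *ᵥ (((Bᵀ * B)⁻¹ * Bᵀ) *ᵥ r - v)) := by
  set a := (1 - B * (Bᵀ * B)⁻¹ * Bᵀ) *ᵥ r
  set w := B *ᵥ (((Bᵀ * B)⁻¹ * Bᵀ) *ᵥ r - v)
  have hsplit : r - B *ᵥ v = a + w := by
    simp only [a, w]
    rw [← sub_mulVec_leastSquares, mulVec_sub]
    abel
  have horth : a ⬝ᵥ w = 0 := by
    rw [dotProduct_mulVec, ← mulVec_transpose, transpose_mulVec_one_sub_proj hB, zero_dotProduct]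
  rw [hsplit, add_dotProduct, dotProduct_add, dotProduct_add, horth, dotProduct_comm w a, horth]
  ring

theorem dotProduct_self_one_sub_proj_le (hB : IsUnit (Bᵀ * B)) (r : m → ℝ) (v : k → ℝ) :
    ((1 - B * (Bᵀ * B)⁻¹ * Bᵀ) *ᵥ r) ⬝ᵥ ((1 - B * (Bᵀ * B)⁻¹ * Bᵀ) *ᵥ r) ≤
      (r - B *ᵥ v) ⬝ᵥ (r - B *ᵥ v) := by
  rw [dotProduct_self_sub_mulVec_eq hB r v]
  exact le_add_of_nonneg_right (dotProduct_self_star_nonneg _)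

end LeastSquares

theorem mulVec_eq_mulVec_subtype_add_sum_compl {m ι : Type*} [Fintype ι] [DecidableEq ι]
    (X : Matrix m ι ℝ) (s : Finset ι) (β : ι → ℝ) :
    X *ᵥ β = (of fun i (j : s) => X i j) *ᵥ (fun j : s => β j) +
      fun i => ∑ j ∈ sᶜ, X i j * β j := by
  ext i
  rw [Pi.add_apply, mulVec, dotProduct, ← Finset.sum_add_sum_compl s]
  simp only [mulVec, dotProduct, of_apply]
  rw [← Finset.sum_coe_sort s]

end Matrix

theorem stmt1_general {n p : ℕ} (X : Matrix (Fin n) (Fin p) ℝ) (y : Fin n → ℝ)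
    (s : Finset (Fin p)) (lam : ℝ)
    (hrank : LinearIndependent ℝ (fun j : {x // x ∈ s} => fun i => X i j.1)) :
    let Xs : Matrix (Fin n) {x // x ∈ s} ℝ := Matrix.of fun i j => X i j.1
    let H : Matrix (Fin n) (Fin n) ℝ := Xs * (Xsᵀ * Xs)⁻¹ * Xsᵀ
    let F : (Fin p → ℝ) → ℝ := fun β =>
      (∑ i, (y i - (X *ᵥ β) i) ^ 2) + lam * ∑ j ∈ sᶜ, |β j|
    let G : (Fin p → ℝ) → ℝ := fun β =>
      (∑ i, (((1 - H) *ᵥ (y - fun i => ∑ j ∈ sᶜ, X i j * β j)) i) ^ 2)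
        + lam * ∑ j ∈ sᶜ, |β j|
    sInf (Set.range F) = sInf (Set.range G) ∧
    ∀ β : Fin p → ℝ, (∀ γ, G β ≤ G γ) →
      ∀ γ, F (fun j => if h : j ∈ s then
          ((((Xsᵀ * Xs)⁻¹ * Xsᵀ) *ᵥ (y - fun i => ∑ j' ∈ sᶜ, X i j' * β j')) ⟨j, h⟩)
        else β j) ≤ F γ := by
  intro Xs H F G
  have hB := isUnit_transpose_mul_self_of_linearIndependent_col Xs hrank
  set r : (Fin p → ℝ) → Fin n → ℝ := fun β => y - fun i => ∑ j ∈ sᶜ, X i j * β j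
  set c : (Fin p → ℝ) → Fin p → ℝ := fun β j =>
    if h : j ∈ s then (((Xsᵀ * Xs)⁻¹ * Xsᵀ) *ᵥ r β) ⟨j, h⟩ else β j
  have hres (β) : y - X *ᵥ β = r β - Xs *ᵥ fun j : s => β j := by
    rw [mulVec_eq_mulVec_subtype_add_sum_compl X s β, sub_add_eq_sub_sub_swap]
  have hc_compl (β) : ∀ j ∈ sᶜ, c β j = β j := fun j hj => dif_neg (Finset.mem_compl.mp hj)
  have hc_subtype (β) : (fun j : s => c β j) = ((Xsᵀ * Xs)⁻¹ * Xsᵀ) *ᵥ r β :=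
    funext fun j => dif_pos j.2
  have hrc (β) : r (c β) = r β := by
    refine congrArg (y - ·) (funext fun i => Finset.sum_congr rfl fun j hj => ?_)
    rw [hc_compl β j hj]
  have hF (β) : F β = (y - X *ᵥ β) ⬝ᵥ (y - X *ᵥ β) + lam * ∑ j ∈ sᶜ, |β j| := by
    simp only [F, dotProduct, Pi.sub_apply, sq]
  have hG (β) : G β = ((1 - H) *ᵥ r β) ⬝ᵥ ((1 - H) *ᵥ r β) + lam * ∑ j ∈ sᶜ, |β j| := by
    simp only [G, r, dotProduct, sq]
  have hle (β) : G β ≤ F β := by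
    rw [hF, hG, hres]
    exact add_le_add_left (dotProduct_self_one_sub_proj_le hB _ _) _
  have hFc (β) : F (c β) = G β := by
    rw [hF, hG, hres, hrc, hc_subtype, sub_mulVec_leastSquares,
      Finset.sum_congr rfl fun j hj => congrArg abs (hc_compl β j hj)]
  exact ⟨Real.sInf_range_eq_of_le_of_comp hle c hFc,
    fun β hβ γ => (hFc β).trans_le ((hβ γ).trans (hle γ))⟩

/-- minimizing `‖y − Xβ‖₂² + λ∑_{j∉s}|β_j|` is equivalent to minimizing
`‖(I − H(s))(y − X(sᶜ)β(sᶜ))‖₂² + λ∑_{j∉s}|β_j|`: the minimum values coincide and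
for a minimizing `β(sᶜ)` the optimal `β(s)` is `(X(s)ᵀX(s))⁻¹X(s)ᵀ(y − X(sᶜ)β(sᶜ))`. -/
theorem stmt1 {n p : ℕ} (X : Matrix (Fin n) (Fin p) ℝ) (y : Fin n → ℝ)
    (s : Finset (Fin p)) (lam : ℝ) (hlam : 0 < lam)
    (hrank : LinearIndependent ℝ (fun j : {x // x ∈ s} => fun i => X i j.1)) :
    let Xs : Matrix (Fin n) {x // x ∈ s} ℝ := Matrix.of fun i j => X i j.1
    let H : Matrix (Fin n) (Fin n) ℝ := Xs * (Xsᵀ * Xs)⁻¹ * Xsᵀ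
    let F : (Fin p → ℝ) → ℝ := fun β =>
      (∑ i, (y i - (X *ᵥ β) i) ^ 2) + lam * ∑ j ∈ sᶜ, |β j|
    let G : (Fin p → ℝ) → ℝ := fun β =>
      (∑ i, (((1 - H) *ᵥ (y - fun i => ∑ j ∈ sᶜ, X i j * β j)) i) ^ 2)
        + lam * ∑ j ∈ sᶜ, |β j|
    sInf (Set.range F) = sInf (Set.range G) ∧
    ∀ β : Fin p → ℝ, (∀ γ, G β ≤ G γ) →
      ∀ γ, F (fun j => if h : j ∈ s then
          ((((Xsᵀ * Xs)⁻¹ * Xsᵀ) *ᵥ (y - fun i => ∑ j' ∈ sᶜ, X i j' * β j')) ⟨j, h⟩)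
        else β j) ≤ F γ :=
  stmt1_general X y s lam hrank
end

section
/- Let A be an n×m real matrix of full column rank and b ∈ ℝⁿ a vector not in the column span of A. Then the sum of the entries in the last row of the inverse of the block matrix [[AᵀA, Aᵀb],[bᵀA, bᵀb]] is positive if and only if bᵀA(AᵀA)⁻¹𝟙 < 1, where 𝟙 ∈ ℝᵐ⁺¹ picks out the row sum (equivalently, the sum equals (bᵀEb)⁻¹(1 − bᵀA(AᵀA)⁻¹𝟙_m) where E = I − A(AᵀA)⁻¹Aᵀ). -/
/-!
Write `P = AᵀA`, `q = Aᵀb` and `s = bᵀb - qᵀP⁻¹q`, the Schur complement of `P` in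
`M = [[P, q], [qᵀ, bᵀb]]`. Since `s = bᵀEb = ‖Eb‖²` with `Eb` the residual of projecting `b` onto
the column span of `A`, the hypothesis `b ∉ span A` makes `s > 0`, so `M` is invertible and its
last row is `s⁻¹ (-qᵀP⁻¹, 1)`. Its entries sum to `s⁻¹ (1 - qᵀP⁻¹𝟙)`, and `qᵀP⁻¹𝟙 = bᵀAP⁻¹𝟙`.
-/

open Matrix

namespace Matrix

variable {𝕜 m n ι : Type*}

theorem dotProduct_self_pos [Fintype n] [Ring 𝕜] [LinearOrder 𝕜] [IsStrictOrderedRing 𝕜]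
    {v : n → 𝕜} : 0 < v ⬝ᵥ v ↔ v ≠ 0 :=
  ⟨fun h hv => by simp [hv] at h, fun hv =>
    (Fintype.sum_nonneg fun i => mul_self_nonneg (v i)).lt_of_ne
      (Ne.symm (dotProduct_self_eq_zero.not.mpr hv))⟩

section Projection

variable [Fintype m] [Fintype n] [DecidableEq n]

theorem isUnit_transpose_mul_self [Field 𝕜] [LinearOrder 𝕜] [IsStrictOrderedRing 𝕜]
    {A : Matrix m n 𝕜} (hA : Function.Injective A.mulVec) : IsUnit (Aᵀ * A) := by
  rw [← mulVec_injective_iff_isUnit, ← coe_mulVecLin, ← LinearMap.ker_eq_bot,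
    ker_mulVecLin_eq_bot_iff]
  intro x hx
  have hAx : x ⬝ᵥ ((Aᵀ * A) *ᵥ x) = (A *ᵥ x) ⬝ᵥ (A *ᵥ x) := by
    rw [← mulVec_mulVec, dotProduct_mulVec, vecMul_transpose]
  rw [hx, dotProduct_zero, eq_comm, dotProduct_self_eq_zero] at hAx
  exact hA (by rw [hAx, mulVec_zero])

variable [DecidableEq m]

theorem transpose_mul_one_sub_proj [CommRing 𝕜] (A : Matrix m n 𝕜) (hA : IsUnit (Aᵀ * A)) :
    Aᵀ * (1 - A * (Aᵀ * A)⁻¹ * Aᵀ) = 0 := by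
  rw [Matrix.mul_sub, Matrix.mul_one, ← Matrix.mul_assoc, ← Matrix.mul_assoc,
    mul_nonsing_inv _ ((isUnit_iff_isUnit_det _).mp hA), Matrix.one_mul, sub_self]

theorem one_sub_proj_mulVec [CommRing 𝕜] (A : Matrix m n 𝕜) (b : m → 𝕜) :
    (1 - A * (Aᵀ * A)⁻¹ * Aᵀ) *ᵥ b = b - A *ᵥ ((Aᵀ * A)⁻¹ *ᵥ (Aᵀ *ᵥ b)) := by
  rw [sub_mulVec, one_mulVec, mulVec_mulVec, mulVec_mulVec, Matrix.mul_assoc]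

theorem dotProduct_one_sub_proj_mulVec [CommRing 𝕜] (A : Matrix m n 𝕜) (b : m → 𝕜) :
    b ⬝ᵥ ((1 - A * (Aᵀ * A)⁻¹ * Aᵀ) *ᵥ b) =
      b ⬝ᵥ b - (Aᵀ *ᵥ b) ⬝ᵥ ((Aᵀ * A)⁻¹ *ᵥ (Aᵀ *ᵥ b)) := by
  rw [one_sub_proj_mulVec, dotProduct_sub, dotProduct_mulVec, ← mulVec_transpose]

theorem dotProduct_one_sub_proj_mulVec_self [CommRing 𝕜] (A : Matrix m n 𝕜)
    (hA : IsUnit (Aᵀ * A)) (b : m → 𝕜) :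
    b ⬝ᵥ ((1 - A * (Aᵀ * A)⁻¹ * Aᵀ) *ᵥ b) =
      ((1 - A * (Aᵀ * A)⁻¹ * Aᵀ) *ᵥ b) ⬝ᵥ ((1 - A * (Aᵀ * A)⁻¹ * Aᵀ) *ᵥ b) := by
  -- `b - E b` lies in the column span of `A`, to which `E b` is orthogonal
  rw [← sub_eq_zero, ← sub_dotProduct]
  conv_lhs => arg 1; rw [one_sub_proj_mulVec, sub_sub_cancel]
  rw [dotProduct_comm, dotProduct_mulVec, ← mulVec_transpose, mulVec_mulVec,
    transpose_mul_one_sub_proj A hA, zero_mulVec, zero_dotProduct]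

theorem dotProduct_one_sub_proj_mulVec_pos [Field 𝕜] [LinearOrder 𝕜] [IsStrictOrderedRing 𝕜]
    {A : Matrix m n 𝕜} (hA : IsUnit (Aᵀ * A)) {b : m → 𝕜}
    (hb : b ∉ Submodule.span 𝕜 (Set.range A.col)) :
    0 < b ⬝ᵥ ((1 - A * (Aᵀ * A)⁻¹ * Aᵀ) *ᵥ b) := by
  rw [dotProduct_one_sub_proj_mulVec_self A hA, dotProduct_self_pos]
  intro hr
  rw [one_sub_proj_mulVec, sub_eq_zero] at hr
  exact hb (by rw [← range_mulVecLin, hr]; exact LinearMap.mem_range_self _ _)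

end Projection

section SchurComplement

variable [Field 𝕜] [Fintype ι] [DecidableEq ι]

theorem inv_fromBlocks_replicateCol_replicateRow_inr (P : Matrix ι ι 𝕜) (hP : IsUnit P)
    (u v : ι → 𝕜) (d : 𝕜) (hs : d - v ⬝ᵥ (P⁻¹ *ᵥ u) ≠ 0) :
    (fromBlocks P (replicateCol Unit u) (replicateRow Unit v) (of fun _ _ => d))⁻¹ (Sum.inr ()) =
      (d - v ⬝ᵥ (P⁻¹ *ᵥ u))⁻¹ • Sum.elim (-(v ᵥ* P⁻¹)) 1 := by
  set M := fromBlocks P (replicateCol Unit u) (replicateRow Unit v) (of fun _ _ => d)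
  have := hP.invertible
  have hPdet : IsUnit P.det := (isUnit_iff_isUnit_det P).mp hP
  have hM : IsUnit M.det := by
    have hS : (of fun _ _ => d) - replicateRow Unit v * P⁻¹ * replicateCol Unit u =
        of fun _ _ => d - v ⬝ᵥ (P⁻¹ *ᵥ u) := by
      rw [Matrix.mul_assoc, ← replicateCol_mulVec, replicateRow_mul_replicateCol]; rfl
    rw [det_fromBlocks₁₁, invOf_eq_nonsing_inv, hS, det_unique (_ : Matrix Unit Unit 𝕜)]
    exact hPdet.mul hs.isUnit
  have hrow : ((d - v ⬝ᵥ (P⁻¹ *ᵥ u))⁻¹ • Sum.elim (-(v ᵥ* P⁻¹)) 1) ᵥ* M =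
      Pi.single (Sum.inr ()) 1 := by
    have h₁ : -(v ᵥ* P⁻¹) ᵥ* P + 1 ᵥ* replicateRow Unit v = 0 := by
      rw [neg_vecMul, vecMul_vecMul, nonsing_inv_mul _ hPdet, vecMul_one, neg_add_eq_zero]
      ext; simp [vecMul, dotProduct]
    have h₂ : -(v ᵥ* P⁻¹) ᵥ* replicateCol Unit u + 1 ᵥ* (of fun _ _ => d : Matrix Unit Unit 𝕜) =
        fun _ => d - v ⬝ᵥ (P⁻¹ *ᵥ u) := by
      ext
      rw [Pi.add_apply, mulVec_replicateCol_eq_const, Function.const_apply, neg_dotProduct,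
        ← dotProduct_mulVec]
      simp [vecMul, dotProduct, sub_eq_neg_add]
    rw [smul_vecMul, vecMul_fromBlocks, Sum.elim_comp_inl, Sum.elim_comp_inr, h₁, h₂]
    ext (i | _) <;> simp [hs]
  calc M⁻¹ (Sum.inr ()) = Pi.single (Sum.inr ()) 1 ᵥ* M⁻¹ := (single_one_vecMul _ _).symm
    _ = _ := by rw [← hrow, vecMul_vecMul, mul_nonsing_inv _ hM, vecMul_one]

theorem sum_inv_fromBlocks_replicateCol_replicateRow_inr (P : Matrix ι ι 𝕜) (hP : IsUnit P)
    (u v : ι → 𝕜) (d : 𝕜) (hs : d - v ⬝ᵥ (P⁻¹ *ᵥ u) ≠ 0) :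
    ∑ j, (fromBlocks P (replicateCol Unit u) (replicateRow Unit v)
        (of fun _ _ => d))⁻¹ (Sum.inr ()) j =
      (d - v ⬝ᵥ (P⁻¹ *ᵥ u))⁻¹ * (1 - v ⬝ᵥ (P⁻¹ *ᵥ 1)) := by
  simp only [inv_fromBlocks_replicateCol_replicateRow_inr P hP u v d hs, Pi.smul_apply,
    smul_eq_mul, ← Finset.mul_sum, Fintype.sum_sum_type, dotProduct_mulVec, dotProduct_one]
  simp [sub_eq_neg_add]

end SchurComplement

end Matrix

/-- the sum of the entries of the last row of the inverse of the block
matrix `[[AᵀA, Aᵀb],[bᵀA, bᵀb]]` equals `(bᵀEb)⁻¹(1 − bᵀA(AᵀA)⁻¹𝟙)` where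
`E = I − A(AᵀA)⁻¹Aᵀ`; in particular it is positive iff `bᵀA(AᵀA)⁻¹𝟙 < 1`. -/
theorem stmt4 {n m : ℕ} (A : Matrix (Fin n) (Fin m) ℝ) (b : Fin n → ℝ)
    (hrank : LinearIndependent ℝ (fun j : Fin m => fun i => A i j))
    (hb : b ∉ Submodule.span ℝ (Set.range fun j : Fin m => fun i => A i j)) :
    let M : Matrix (Fin m ⊕ Unit) (Fin m ⊕ Unit) ℝ :=
      Matrix.fromBlocks (Aᵀ * A) (Matrix.of fun i _ => (Aᵀ *ᵥ b) i)
        (Matrix.of fun _ j => (Aᵀ *ᵥ b) j) (Matrix.of fun _ _ => b ⬝ᵥ b)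
    let E : Matrix (Fin n) (Fin n) ℝ := 1 - A * (Aᵀ * A)⁻¹ * Aᵀ
    (0 < ∑ j, M⁻¹ (Sum.inr ()) j ↔ b ⬝ᵥ (A *ᵥ ((Aᵀ * A)⁻¹ *ᵥ fun _ => 1)) < 1) ∧
    ∑ j, M⁻¹ (Sum.inr ()) j =
      (b ⬝ᵥ (E *ᵥ b))⁻¹ * (1 - b ⬝ᵥ (A *ᵥ ((Aᵀ * A)⁻¹ *ᵥ fun _ => 1))) := by
  intro M E
  have hA : IsUnit (Aᵀ * A) := isUnit_transpose_mul_self (mulVec_injective_iff.mpr hrank)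
  have hc : 0 < b ⬝ᵥ (E *ᵥ b) := dotProduct_one_sub_proj_mulVec_pos hA hb
  have hE : b ⬝ᵥ (E *ᵥ b) = b ⬝ᵥ b - (Aᵀ *ᵥ b) ⬝ᵥ ((Aᵀ * A)⁻¹ *ᵥ (Aᵀ *ᵥ b)) :=
    dotProduct_one_sub_proj_mulVec A b
  have hsum : ∑ j, M⁻¹ (Sum.inr ()) j =
      (b ⬝ᵥ (E *ᵥ b))⁻¹ * (1 - b ⬝ᵥ (A *ᵥ ((Aᵀ * A)⁻¹ *ᵥ fun _ => 1))) := by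
    rw [hE, dotProduct_mulVec b A, ← mulVec_transpose]
    exact sum_inv_fromBlocks_replicateCol_replicateRow_inr _ hA _ _ _ (hE ▸ hc.ne')
  refine ⟨?_, hsum⟩
  rw [hsum, mul_pos_iff_of_pos_left (inv_pos.mpr hc), sub_pos]
end

section
/- Let X̃(A) be an n×ν matrix of full column rank whose Gram matrix G = X̃(A)ᵀX̃(A) satisfies G⁻¹𝟙 > 0 componentwise. Then for every j among the ν columns, the vector x̃_j satisfies x̃_jᵀ X̃(A∖{j}) (X̃(A∖{j})ᵀX̃(A∖{j}))⁻¹ 𝟙 < 1, where X̃(A∖{j}) omits column j. Conversely, if this inequality holds for all j, then G⁻¹𝟙 > 0. -/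
/-!
Deleting column `j`, pad the solution of the reduced system `(X̃ᵀX̃)(A∖{j}) w = 𝟙` by a zero in
place `j`. It solves `G u = 𝟙 - (1 - sⱼ) eⱼ`, where `sⱼ` is the left side of the `j`-th inequality,
so `(G⁻¹𝟙)ⱼ = (1 - sⱼ) (G⁻¹)ⱼⱼ`. As `G⁻¹` is positive definite, `(G⁻¹)ⱼⱼ > 0`, and the two signs
agree coordinatewise.
-/

open Matrix

namespace Matrix

section Field

variable {K ι : Type*} [Field K] [Fintype ι] [DecidableEq ι]

lemma mulVec_dite_eq_zero_apply (G : Matrix ι ι K) (j : ι) (w : {k // k ≠ j} → K) (i : ι) :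
    (G *ᵥ fun k => if h : k = j then 0 else w ⟨k, h⟩) i = ∑ l : {k // k ≠ j}, G i l * w l := by
  rw [mulVec, dotProduct, Fintype.sum_eq_add_sum_subtype_ne _ j]
  simp only [dite_eq_ite, Subtype.coe_eta, dite_true, mul_ite, mul_zero, zero_add]
  exact Finset.sum_congr rfl fun l _ => if_neg l.2

/-- The solution of the system with row and column `j` deleted, padded by `0`, satisfies `G x = b`
except in row `j`, where it misses by the residual in parentheses. -/
theorem inv_mulVec_apply_eq_residual_mul_inv_apply {G : Matrix ι ι K} (hG : IsUnit G.det) (j : ι)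
    (hH : IsUnit (G.submatrix (Subtype.val : {k // k ≠ j} → ι) Subtype.val).det) (b : ι → K) :
    (G⁻¹ *ᵥ b) j = (b j - ∑ k : {k // k ≠ j}, G j k *
        ((G.submatrix (Subtype.val : {k // k ≠ j} → ι) Subtype.val)⁻¹ *ᵥ
          fun k : {k // k ≠ j} => b k) k) * G⁻¹ j j := by
  set H := G.submatrix (Subtype.val : {k // k ≠ j} → ι) Subtype.val
  set w := H⁻¹ *ᵥ fun k : {k // k ≠ j} => b k
  set r := b j - ∑ k : {k // k ≠ j}, G j k * w k
  set u : ι → K := fun k => if h : k = j then 0 else w ⟨k, h⟩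
  have hGu : b = G *ᵥ u + r • Pi.single j 1 := by
    funext i
    rw [Pi.add_apply, mulVec_dite_eq_zero_apply]
    by_cases hi : i = j
    · subst hi
      simp [r]
    · have hHw : ∑ l : {k // k ≠ j}, G i l * w l = (H *ᵥ w) ⟨i, hi⟩ := rfl
      rw [hHw, mulVec_mulVec, mul_nonsing_inv _ hH, one_mulVec]
      simp [hi]
  have hsol : G⁻¹ *ᵥ b = u + r • G⁻¹.col j := by
    rw [hGu, mulVec_add, mulVec_smul, mulVec_mulVec, nonsing_inv_mul _ hG, one_mulVec,
      mulVec_single_one]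
  simp [hsol, u]

end Field

variable {m ι : Type*} [Fintype m]

lemma posDef_transpose_mul_self [Fintype ι] {X : Matrix m ι ℝ} (hX : LinearIndependent ℝ X.col) :
    (Xᵀ * X).PosDef := by
  simpa only [conjTranspose_eq_transpose_of_trivial] using
    PosDef.conjTranspose_mul_self X (mulVec_injective_iff.mpr hX)

lemma transpose_mul_self_submatrix (X : Matrix m ι ℝ) (j : ι) :
    (Xᵀ * X).submatrix (Subtype.val : {k // k ≠ j} → ι) Subtype.val =
      (X.submatrix id Subtype.val)ᵀ * X.submatrix id (Subtype.val : {k // k ≠ j} → ι) := by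
  rw [submatrix_mul _ _ _ id _ Function.bijective_id, transpose_submatrix]

theorem inv_transpose_mul_self_mulVec_apply [Fintype ι] [DecidableEq ι] {X : Matrix m ι ℝ}
    (hX : LinearIndependent ℝ X.col) (j : ι) (b : ι → ℝ) :
    let Y := X.submatrix id (Subtype.val : {k // k ≠ j} → ι)
    ((Xᵀ * X)⁻¹ *ᵥ b) j =
      (b j - X.col j ⬝ᵥ ((Y * (Yᵀ * Y)⁻¹) *ᵥ fun k : {k // k ≠ j} => b k)) * (Xᵀ * X)⁻¹ j j := by
  intro Y
  have hG := posDef_transpose_mul_self hX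
  have hH : (Yᵀ * Y).PosDef := posDef_transpose_mul_self (hX.comp _ Subtype.val_injective)
  rw [← transpose_mul_self_submatrix] at hH
  rw [inv_mulVec_apply_eq_residual_mul_inv_apply ((isUnit_iff_isUnit_det _).mp hG.isUnit) j
      ((isUnit_iff_isUnit_det _).mp hH.isUnit),
    transpose_mul_self_submatrix, ← mulVec_mulVec, dotProduct_mulVec]
  rfl

end Matrix

/-- for a full-column-rank matrix with Gram matrix `G`, one has
`G⁻¹𝟙 > 0` componentwise iff for every column `j`,
`x̃_jᵀ X̃(A∖{j}) (X̃(A∖{j})ᵀX̃(A∖{j}))⁻¹ 𝟙 < 1`. -/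
theorem stmt7 {n ν : ℕ} (X : Matrix (Fin n) (Fin ν) ℝ)
    (hrank : LinearIndependent ℝ fun j : Fin ν => fun i => X i j) :
    (∀ i, 0 < (((Xᵀ * X)⁻¹ *ᵥ fun _ => (1 : ℝ)) i)) ↔
    (∀ j : Fin ν,
      (fun i => X i j) ⬝ᵥ
        (((Matrix.of fun i (k : {x : Fin ν // x ≠ j}) => X i k.1) *
          ((Matrix.of fun i (k : {x : Fin ν // x ≠ j}) => X i k.1)ᵀ *
            (Matrix.of fun i (k : {x : Fin ν // x ≠ j}) => X i k.1))⁻¹) *ᵥ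
          fun _ => (1 : ℝ)) < 1) := by
  refine forall_congr' fun j => ?_
  rw [inv_transpose_mul_self_mulVec_apply hrank j,
    mul_pos_iff_of_pos_right (posDef_transpose_mul_self hrank).inv.diag_pos, sub_pos]
  rfl
end

section
/- Let M be the n×n projection complement I − H(s), μ ∈ ℝⁿ, and for each column X_j of X define γ(j) = (1/n)X_jᵀMμ. Suppose for all j in a set s₀ᶜ, ‖X̃_jᵀX̃(s⁻)(X̃(s⁻)ᵀX̃(s⁻))⁻¹‖₁ < 1 − η for some 0 < η < 1, where X̃_j = MX_j, X̃(s⁻) = MX(s⁻), and μ lies in the span of the columns of X(s ∪ s⁻). Then max_{j ∈ s₀ᶜ} |γ(j)| ≤ (1−η) max_{j ∈ s⁻} |γ(j)|. -/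
/-!
`M = I - H(s)` is a symmetric idempotent that kills the columns of `X` in `s`, so `Mμ` lies in the
column space of `X̃ = M X(s⁻)` and is fixed by its hat matrix `X̃(X̃ᵀX̃)⁻¹X̃ᵀ`. Together with
`X_jᵀMμ = (MX_j)ᵀMμ` and `X̃ᵀMμ = X(s⁻)ᵀMμ` this writes `γ(j) = Σ_k c_{jk} γ(k)` over `k ∈ s⁻`,
with `c_j = (MX_j)ᵀX̃(X̃ᵀX̃)⁻¹`, and Hölder's inequality with `‖c_j‖₁ < 1 - η` gives the bound.
-/

open Matrix

/-- The projection matrix `H(t)` onto the column span of the columns of `X` in `t`. -/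
noncomputable def proj {n p : ℕ} (X : Matrix (Fin n) (Fin p) ℝ) (t : Finset (Fin p)) :
    Matrix (Fin n) (Fin n) ℝ :=
  let Xt : Matrix (Fin n) {x // x ∈ t} ℝ := Matrix.of fun i k => X i k.1
  Xt * (Xtᵀ * Xt)⁻¹ * Xtᵀ

/-- `X̃(t) = (I − H(s)) X(t)`, the columns of `X` in `t` projected by `I − H(s)`. -/
noncomputable def Xtil {n p : ℕ} (X : Matrix (Fin n) (Fin p) ℝ) (s t : Finset (Fin p)) :
    Matrix (Fin n) {x // x ∈ t} ℝ :=
  (1 - proj X s) * Matrix.of fun i k => X i k.1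

namespace Matrix

variable {m k R : Type*} [Fintype m]

theorem isUnit_det_transpose_mul_self [Fintype k] [DecidableEq k] [Field R] [LinearOrder R]
    [IsStrictOrderedRing R] {A : Matrix m k R} (hA : LinearIndependent R A.col) :
    IsUnit (Aᵀ * A).det := by
  rw [← isUnit_iff_isUnit_det, ← mulVec_injective_iff_isUnit, ← coe_mulVecLin,
    ← LinearMap.ker_eq_bot, ker_mulVecLin_transpose_mul_self, LinearMap.ker_eq_bot,
    coe_mulVecLin, mulVec_injective_iff]
  exact hA

section HatMatrix

variable [Fintype k] [DecidableEq k] [CommRing R]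

/-- The orthogonal projection onto the column space of `A` when `AᵀA` is invertible (otherwise the
inverse is the junk value `0`, and so is this matrix). -/
noncomputable def hatMatrix (A : Matrix m k R) : Matrix m m R :=
  A * (Aᵀ * A)⁻¹ * Aᵀ

theorem isSymm_hatMatrix (A : Matrix m k R) : (hatMatrix A).IsSymm := by
  rw [IsSymm, hatMatrix, transpose_mul, transpose_mul, transpose_transpose, transpose_nonsing_inv,
    transpose_mul, transpose_transpose, Matrix.mul_assoc]

theorem hatMatrix_mul_self {A : Matrix m k R} (hA : IsUnit (Aᵀ * A).det) :
    hatMatrix A * A = A := by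
  rw [hatMatrix, Matrix.mul_assoc, Matrix.mul_assoc, nonsing_inv_mul _ hA, Matrix.mul_one]

theorem hatMatrix_mulVec_of_mem_range {A : Matrix m k R} (hA : IsUnit (Aᵀ * A).det) {w : m → R}
    (hw : w ∈ LinearMap.range A.mulVecLin) : hatMatrix A *ᵥ w = w := by
  obtain ⟨d, rfl⟩ := hw
  rw [mulVecLin_apply, mulVec_mulVec, hatMatrix_mul_self hA]

theorem dotProduct_eq_of_mem_range {B : Matrix m k R} (hB : IsUnit (Bᵀ * B).det) {w : m → R}
    (hw : w ∈ LinearMap.range B.mulVecLin) (y : m → R) :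
    y ⬝ᵥ w = (y ᵥ* (B * (Bᵀ * B)⁻¹)) ⬝ᵥ (Bᵀ *ᵥ w) := by
  conv_lhs => rw [← hatMatrix_mulVec_of_mem_range hB hw]
  rw [hatMatrix, ← mulVec_mulVec, dotProduct_mulVec]

variable [DecidableEq m]

theorem isSymm_one_sub_hatMatrix (A : Matrix m k R) : (1 - hatMatrix A).IsSymm :=
  isSymm_one.sub (isSymm_hatMatrix A)

theorem one_sub_hatMatrix_mul_self {A : Matrix m k R} (hA : IsUnit (Aᵀ * A).det) :
    (1 - hatMatrix A) * A = 0 := by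
  rw [Matrix.sub_mul, Matrix.one_mul, hatMatrix_mul_self hA, sub_self]

theorem isIdempotentElem_one_sub_hatMatrix {A : Matrix m k R} (hA : IsUnit (Aᵀ * A).det) :
    IsIdempotentElem (1 - hatMatrix A) := by
  refine IsIdempotentElem.one_sub ?_
  calc hatMatrix A * hatMatrix A = hatMatrix A * A * ((Aᵀ * A)⁻¹ * Aᵀ) := by
        simp only [hatMatrix, Matrix.mul_assoc]
    _ = hatMatrix A := by rw [hatMatrix_mul_self hA, hatMatrix, Matrix.mul_assoc]

end HatMatrix

section SymmIdempotent

variable [CommRing R] {M : Matrix m m R}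

theorem dotProduct_mulVec_eq_mulVec_dotProduct_mulVec (hMs : M.IsSymm)
    (hMi : IsIdempotentElem M) (x μ : m → R) : x ⬝ᵥ (M *ᵥ μ) = (M *ᵥ x) ⬝ᵥ (M *ᵥ μ) := by
  conv_lhs => rw [← hMi.eq, ← mulVec_mulVec, dotProduct_mulVec]
  congr 1
  rw [← vecMul_transpose, hMs.eq]

theorem transpose_mul_mulVec_mulVec (hMs : M.IsSymm) (hMi : IsIdempotentElem M)
    (A : Matrix m k R) (μ : m → R) : (M * A)ᵀ *ᵥ (M *ᵥ μ) = Aᵀ *ᵥ (M *ᵥ μ) := by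
  rw [transpose_mul, hMs.eq, ← mulVec_mulVec, mulVec_mulVec μ M M, hMi.eq]

theorem dotProduct_mulVec_eq_of_mem_range [Fintype k] [DecidableEq k] (hMs : M.IsSymm)
    (hMi : IsIdempotentElem M) {A : Matrix m k R} (hB : IsUnit ((M * A)ᵀ * (M * A)).det)
    {μ : m → R} (hμ : M *ᵥ μ ∈ LinearMap.range (M * A).mulVecLin) (x : m → R) :
    x ⬝ᵥ (M *ᵥ μ) =
      ((M *ᵥ x) ᵥ* (M * A * ((M * A)ᵀ * (M * A))⁻¹)) ⬝ᵥ (Aᵀ *ᵥ (M *ᵥ μ)) := by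
  rw [dotProduct_mulVec_eq_mulVec_dotProduct_mulVec hMs hMi, dotProduct_eq_of_mem_range hB hμ,
    transpose_mul_mulVec_mulVec hMs hMi]

end SymmIdempotent

end Matrix

theorem abs_dotProduct_le_sum_abs_mul {ι R : Type*} [Fintype ι] [Ring R] [LinearOrder R]
    [IsStrictOrderedRing R] (c g : ι → R) {b : R} (hg : ∀ i, |g i| ≤ b) :
    |c ⬝ᵥ g| ≤ (∑ i, |c i|) * b :=
  calc |c ⬝ᵥ g| ≤ ∑ i, |c i * g i| := Finset.abs_sum_le_sum_abs _ _
    _ ≤ ∑ i, |c i| * b := by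
      gcongr with i
      rw [abs_mul]
      exact mul_le_mul_of_nonneg_left (hg i) (abs_nonneg _)
    _ = (∑ i, |c i|) * b := (Finset.sum_mul _ _ _).symm

theorem LinearMap.mem_span_image_of_mem_span_image_union {R V W ι : Type*} [Semiring R]
    [AddCommMonoid V] [AddCommMonoid W] [Module R V] [Module R W] (f : V →ₗ[R] W) (v : ι → V)
    {s t : Set ι} (hs : ∀ i ∈ s, f (v i) = 0) {x : V} (hx : x ∈ Submodule.span R (v '' (s ∪ t))) :
    f x ∈ Submodule.span R ((f ∘ v) '' t) := by
  rw [Set.image_union, Submodule.span_union, Submodule.mem_sup] at hx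
  obtain ⟨y, hy, z, hz, rfl⟩ := hx
  have hfy : f y = 0 := by
    suffices Submodule.span R (v '' s) ≤ LinearMap.ker f from this hy
    rw [Submodule.span_le]
    rintro _ ⟨i, hi, rfl⟩
    exact hs i hi
  rw [map_add, hfy, zero_add, Set.image_comp, ← Submodule.map_span]
  exact Submodule.mem_map_of_mem hz

theorem one_sub_proj_mulVec_mem_range_Xtil {n p : ℕ} {X : Matrix (Fin n) (Fin p) ℝ}
    {s t : Finset (Fin p)} (hs : LinearIndependent ℝ fun k : {x // x ∈ s} => fun i => X i k.1)
    {μ : Fin n → ℝ}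
    (hμ : μ ∈ Submodule.span ℝ (Set.range fun k : {x // x ∈ s ∪ t} => fun i => X i k.1)) :
    (1 - proj X s) *ᵥ μ ∈ LinearMap.range (Xtil X s t).mulVecLin := by
  have hker : ∀ x ∈ (s : Set (Fin p)), (1 - proj X s).mulVecLin (X.col x) = 0 := fun x hx => by
    funext i
    exact congrFun (congrFun (one_sub_hatMatrix_mul_self (isUnit_det_transpose_mul_self hs)) i)
      ⟨x, hx⟩
  have hμ' : μ ∈ Submodule.span ℝ (X.col '' (↑s ∪ ↑t)) := by
    rwa [← Finset.coe_union, Set.image_eq_range]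
  have := (1 - proj X s).mulVecLin.mem_span_image_of_mem_span_image_union X.col hker hμ'
  rw [range_mulVecLin]
  rwa [Set.image_eq_range] at this

theorem stmt8_general {n p : ℕ} (X : Matrix (Fin n) (Fin p) ℝ)
    (s s₀ : Finset (Fin p)) (μ : Fin n → ℝ) (η : ℝ)
    (hne : (s₀ \ s).Nonempty)
    (hranks : LinearIndependent ℝ fun k : {x // x ∈ s} => fun i => X i k.1)
    (hrank : LinearIndependent ℝ fun k : {x // x ∈ s₀ \ s} => fun i => Xtil X s (s₀ \ s) i k)
    (hμ : μ ∈ Submodule.span ℝ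
      (Set.range fun k : {x // x ∈ s ∪ (s₀ \ s)} => fun i => X i k.1))
    (hERC : ∀ j ∈ s₀ᶜ,
      ∑ k : {x // x ∈ s₀ \ s},
        |((((1 - proj X s) *ᵥ fun i => X i j) ᵥ*
            (Xtil X s (s₀ \ s) *
              ((Xtil X s (s₀ \ s))ᵀ * Xtil X s (s₀ \ s))⁻¹)) k)| < 1 - η) :
    ∀ j ∈ s₀ᶜ,
      |(1 / (n : ℝ)) * ((fun i => X i j) ⬝ᵥ ((1 - proj X s) *ᵥ μ))| ≤
        (1 - η) * (s₀ \ s).sup' hne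
          fun k => |(1 / (n : ℝ)) * ((fun i => X i k) ⬝ᵥ ((1 - proj X s) *ᵥ μ))| := by
  intro j hj
  set M := 1 - proj X s
  set γ : Fin p → ℝ := fun x => (1 / (n : ℝ)) * ((fun i => X i x) ⬝ᵥ (M *ᵥ μ))
  set c := (M *ᵥ fun i => X i j) ᵥ*
    (Xtil X s (s₀ \ s) * ((Xtil X s (s₀ \ s))ᵀ * Xtil X s (s₀ \ s))⁻¹)
  set S := (s₀ \ s).sup' hne fun k => |γ k|
  -- `proj X s` is by definition the `hatMatrix` of the columns in `s`.
  have hMs : M.IsSymm := isSymm_one_sub_hatMatrix _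
  have hMi : IsIdempotentElem M :=
    isIdempotentElem_one_sub_hatMatrix (isUnit_det_transpose_mul_self hranks)
  have hγ : γ j = c ⬝ᵥ fun k => γ k := by
    simp only [γ]
    rw [dotProduct_mulVec_eq_of_mem_range hMs hMi (isUnit_det_transpose_mul_self hrank)
      (one_sub_proj_mulVec_mem_range_Xtil hranks hμ), ← smul_eq_mul, ← dotProduct_smul]
    rfl
  calc |γ j| ≤ (∑ k, |c k|) * S :=
        hγ ▸ abs_dotProduct_le_sum_abs_mul _ _ fun k => Finset.le_sup' (fun k => |γ k|) k.2
    _ ≤ (1 - η) * S := mul_le_mul_of_nonneg_right (hERC j hj).le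
        (Finset.le_sup'_of_le _ hne.choose_spec (abs_nonneg _))

/-- if `‖X̃_jᵀX̃(s⁻)(X̃(s⁻)ᵀX̃(s⁻))⁻¹‖₁ < 1 − η` for all `j ∈ s₀ᶜ` and
`μ ∈ span(X(s ∪ s⁻))`, then `max_{j∈s₀ᶜ}|γ(j)| ≤ (1−η) max_{j∈s⁻}|γ(j)|`, where
`γ(j) = (1/n)X_jᵀ(I − H(s))μ`. -/
theorem stmt8 {n p : ℕ} (hn : 0 < n) (X : Matrix (Fin n) (Fin p) ℝ)
    (s s₀ : Finset (Fin p)) (μ : Fin n → ℝ) (η : ℝ) (hη : 0 < η) (hη1 : η < 1)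
    (hne : (s₀ \ s).Nonempty)
    (hranks : LinearIndependent ℝ fun k : {x // x ∈ s} => fun i => X i k.1)
    (hrank : LinearIndependent ℝ fun k : {x // x ∈ s₀ \ s} => fun i => Xtil X s (s₀ \ s) i k)
    (hμ : μ ∈ Submodule.span ℝ
      (Set.range fun k : {x // x ∈ s ∪ (s₀ \ s)} => fun i => X i k.1))
    (hERC : ∀ j ∈ s₀ᶜ,
      ∑ k : {x // x ∈ s₀ \ s},
        |((((1 - proj X s) *ᵥ fun i => X i j) ᵥ*
            (Xtil X s (s₀ \ s) *
              ((Xtil X s (s₀ \ s))ᵀ * Xtil X s (s₀ \ s))⁻¹)) k)| < 1 - η) :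
    ∀ j ∈ s₀ᶜ,
      |(1 / (n : ℝ)) * ((fun i => X i j) ⬝ᵥ ((1 - proj X s) *ᵥ μ))| ≤
        (1 - η) * (s₀ \ s).sup' hne
          fun k => |(1 / (n : ℝ)) * ((fun i => X i k) ⬝ᵥ ((1 - proj X s) *ᵥ μ))| :=
  stmt8_general X s s₀ μ η hne hranks hrank hμ hERC
end

section
/- Consider the compound-symmetric correlation matrix Σ = (1−ρ)I + ρ𝟙𝟙ᵀ with 0 < ρ < 1 on index set S, a subset s ⊊ s₀ ⊂ S, and β supported on s₀. With a = (1−ρ)(ρ|s|+1)/(1+(|s|−1)ρ) and b = ρ(1−ρ)/(1+(|s|−1)ρ), the quantity Γ(j, s, β) = (Σ_{jS} − Σ_{js}Σ_{ss}⁻¹Σ_{sS})β equals b·Σ_{k∈s⁻}β_k + (1−ρ)β_j for j ∈ s⁻ := s₀∖s, and equals b·Σ_{k∈s⁻}β_k for j ∈ s₀ᶜ. Consequently, max_{j∈s⁻}|Γ(j,s,β)| > max_{j∈s₀ᶜ}|Γ(j,s,β)| whenever β(s⁻) ≠ 0. -/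
/-!
For `j ∉ s` the row `Σ_{js}` is the constant vector `ρ𝟙`, and `𝟙` is an eigenvector of
`Σ_{ss} = (1 - ρ)I + ρ𝟙𝟙ᵀ` with eigenvalue `1 + (|s| - 1)ρ`. Hence
`Σ_{js} Σ_{ss}⁻¹ = ρ / (1 + (|s| - 1)ρ) · 𝟙ᵀ` and `Γ(j, s, β)` is an explicit linear form in `β`.
For the strict inequality choose `j ∈ s⁻` with `β_j ≠ 0` and `β_j ∑_{k ∈ s⁻} β_k ≥ 0` (a nonzero
sum has a summand of its own sign): adding `(1 - ρ)β_j` to `b ∑_{k ∈ s⁻} β_k` then strictly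
increases its absolute value.
-/

open Matrix Finset

variable {ι R : Type*} [DecidableEq ι]

def compoundSymm [One R] (ρ : R) : Matrix ι ι R := of fun i j => if i = j then 1 else ρ

section CommRing

variable [CommRing R]

lemma compoundSymm_eq (ρ : R) :
    (compoundSymm ρ : Matrix ι ι R) = (1 - ρ) • 1 + ρ • vecMulVec 1 1 := by
  ext i j
  by_cases h : i = j <;> simp [compoundSymm, h, one_apply]

lemma compoundSymm_transpose (ρ : R) : (compoundSymm ρ : Matrix ι ι R)ᵀ = compoundSymm ρ := by
  ext i j
  simp [compoundSymm, eq_comm]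

lemma compoundSymm_submatrix {κ : Type*} [DecidableEq κ] {f : κ → ι} (hf : f.Injective)
    (ρ : R) : (compoundSymm ρ : Matrix ι ι R).submatrix f f = compoundSymm ρ := by
  ext i j
  simp [compoundSymm, hf.eq_iff]

variable [Fintype ι]

lemma compoundSymm_mulVec (ρ : R) (v : ι → R) :
    compoundSymm ρ *ᵥ v = fun i => ρ * ∑ k, v k + (1 - ρ) * v i := by
  ext i
  rw [compoundSymm_eq, add_mulVec, smul_mulVec, smul_mulVec, one_mulVec]
  simp only [Pi.add_apply, Pi.smul_apply, smul_eq_mul, mulVec, dotProduct, vecMulVec_apply,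
    Pi.one_apply, one_mul]
  ring

lemma vecMul_compoundSymm (ρ : R) (v : ι → R) :
    v ᵥ* compoundSymm ρ = fun i => ρ * ∑ k, v k + (1 - ρ) * v i := by
  rw [← mulVec_transpose, compoundSymm_transpose, compoundSymm_mulVec]

end CommRing

lemma vecMul_nonsing_inv_of_vecMul_eq_smul {K n : Type*} [Field K] [Fintype n] [DecidableEq n]
    {M : Matrix n n K} (hM : IsUnit M) {v : n → K} {c : K} (hc : c ≠ 0)
    (hv : v ᵥ* M = c • v) : v ᵥ* M⁻¹ = c⁻¹ • v := by
  have hM' : M * M⁻¹ = 1 := mul_nonsing_inv M ((isUnit_iff_isUnit_det M).1 hM)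
  calc v ᵥ* M⁻¹ = (c⁻¹ • (v ᵥ* M)) ᵥ* M⁻¹ := by
        rw [hv, smul_smul, inv_mul_cancel₀ hc, one_smul]
    _ = c⁻¹ • v := by rw [smul_vecMul, vecMul_vecMul, hM', vecMul_one]

lemma one_add_sub_one_mul_pos {ρ : ℝ} (n : ℕ) (hρ : 0 ≤ ρ) (hρ1 : ρ < 1) :
    0 < 1 + ((n : ℝ) - 1) * ρ := by
  have : (0 : ℝ) ≤ n := Nat.cast_nonneg n
  nlinarith

lemma sum_compl_eq_sum_sdiff {α M : Type*} [Fintype α] [DecidableEq α] [AddCommMonoid M]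
    {s s₀ : Finset α} {f : α → M} (hf : ∀ j ∉ s₀, f j = 0) :
    ∑ k ∈ sᶜ, f k = ∑ k ∈ s₀ \ s, f k :=
  (sum_subset (fun _ hk => mem_compl.2 (mem_sdiff.1 hk).2)
    fun k hk hk' => hf k fun h => hk' (mem_sdiff.2 ⟨h, mem_compl.1 hk⟩)).symm

lemma exists_abs_lt_abs_mul_sum_add {α : Type*} {t : Finset α} {b c : ℝ} (hb : 0 < b)
    (hc : 0 < c) {β : α → ℝ} (hβ : ∃ j ∈ t, β j ≠ 0) :
    ∃ k ∈ t, |b * ∑ i ∈ t, β i| < |b * ∑ i ∈ t, β i + c * β k| := by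
  set B := ∑ i ∈ t, β i
  obtain ⟨k, hk, hβk, hsign⟩ : ∃ k ∈ t, β k ≠ 0 ∧ 0 ≤ B * β k := by
    by_cases hB : B = 0
    · obtain ⟨j, hj, hβj⟩ := hβ
      exact ⟨j, hj, hβj, by simp [hB]⟩
    · obtain ⟨k, hk, hpos⟩ := exists_lt_of_sum_lt (s := t) (f := fun _ => (0 : ℝ))
        (g := fun i => B * β i) (by rw [sum_const_zero, ← mul_sum]; exact mul_self_pos.2 hB)
      exact ⟨k, hk, fun h => by simp [h] at hpos, hpos.le⟩
  refine ⟨k, hk, sq_lt_sq.1 ?_⟩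
  have hcross : 0 ≤ b * c * (B * β k) := mul_nonneg (mul_pos hb hc).le hsign
  have hsq : 0 < c * β k * (c * β k) := mul_self_pos.2 (mul_ne_zero hc.ne' hβk)
  nlinarith

section Real

variable [Fintype ι] {ρ : ℝ}

lemma compoundSymm_posDef (hρ : 0 ≤ ρ) (hρ1 : ρ < 1) :
    (compoundSymm ρ : Matrix ι ι ℝ).PosDef := by
  rw [compoundSymm_eq]
  exact (PosDef.one.smul (sub_pos.2 hρ1)).add_posSemidef
    ((posSemidef_vecMulVec_self_star _).smul hρ)

lemma one_vecMul_compoundSymm_inv (hρ : 0 ≤ ρ) (hρ1 : ρ < 1) :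
    (1 : ι → ℝ) ᵥ* (compoundSymm ρ)⁻¹ = (1 + (Fintype.card ι - 1) * ρ)⁻¹ • 1 := by
  refine vecMul_nonsing_inv_of_vecMul_eq_smul (compoundSymm_posDef hρ hρ1).isUnit
    (one_add_sub_one_mul_pos _ hρ hρ1).ne' ?_
  ext i
  simp only [vecMul_compoundSymm, Pi.one_apply, sum_const, card_univ, nsmul_eq_mul, mul_one,
    Pi.smul_apply, smul_eq_mul]
  ring

/-- `Γ(j, s, β) = (C_{jS} - C_{js} C_{ss}⁻¹ C_{sS}) β`. -/
noncomputable def gamma (C : Matrix ι ι ℝ) (s : Finset ι) (β : ι → ℝ) (j : ι) : ℝ :=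
  C j ⬝ᵥ β - ((fun t : s => C j t) ᵥ*
    ((C.submatrix ((↑) : s → ι) ((↑) : s → ι))⁻¹ * C.submatrix ((↑) : s → ι) id)) ⬝ᵥ β

lemma gamma_compoundSymm_of_notMem (hρ : 0 ≤ ρ) (hρ1 : ρ < 1) {s : Finset ι} (β : ι → ℝ)
    {j : ι} (hj : j ∉ s) :
    gamma (compoundSymm ρ) s β j =
      ρ * (1 - ρ) / (1 + (#s - 1) * ρ) * ∑ k ∈ sᶜ, β k + (1 - ρ) * β j := by
  have hrow : (fun t : s => (compoundSymm ρ : Matrix ι ι ℝ) j t) = ρ • 1 := by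
    ext t
    simp [compoundSymm, (ne_of_mem_of_not_mem t.2 hj).symm]
  have hw := one_vecMul_compoundSymm_inv (ι := s) hρ hρ1
  rw [Fintype.card_coe] at hw
  have hrowj : compoundSymm ρ j ⬝ᵥ β = (compoundSymm ρ *ᵥ β) j := rfl
  have hsub : (compoundSymm ρ).submatrix ((↑) : s → ι) id *ᵥ β =
      fun t : s => (compoundSymm ρ *ᵥ β) t := rfl
  have hsum : ∑ t : s, (compoundSymm ρ *ᵥ β) t =
      #s * ρ * ∑ k, β k + (1 - ρ) * ∑ k ∈ s, β k := by
    rw [sum_coe_sort s (compoundSymm ρ *ᵥ β), compoundSymm_mulVec, sum_add_distrib, sum_const,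
      ← mul_sum, nsmul_eq_mul, mul_assoc]
  rw [gamma, hrow, compoundSymm_submatrix Subtype.val_injective, ← vecMul_vecMul, smul_vecMul,
    hw, smul_smul, smul_vecMul, smul_dotProduct, ← dotProduct_mulVec, hsub, one_dotProduct]
  rw [hsum, hrowj, compoundSymm_mulVec, ← sum_add_sum_compl s β, smul_eq_mul]
  set D := 1 + ((#s : ℝ) - 1) * ρ with hD
  have : D ≠ 0 := (one_add_sub_one_mul_pos _ hρ hρ1).ne'
  field_simp
  rw [hD]
  ring

end Real

/-- for the compound-symmetric `Σ = (1−ρ)I + ρ𝟙𝟙ᵀ`, `s ⊊ s₀`, and `β`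
supported on `s₀`, with `b = ρ(1−ρ)/(1+(|s|−1)ρ)`, the quantity
`Γ(j,s,β) = (Σ_{jS} − Σ_{js}Σ_{ss}⁻¹Σ_{sS})β` equals `b·∑_{k∈s⁻}β_k + (1−ρ)β_j` for
`j ∈ s⁻ = s₀∖s` and `b·∑_{k∈s⁻}β_k` for `j ∈ s₀ᶜ`; consequently
`max_{j∈s⁻}|Γ| > max_{j∈s₀ᶜ}|Γ|` whenever `β(s⁻) ≠ 0`. -/
theorem stmt11 {p : ℕ} (ρ : ℝ) (hρ : 0 < ρ) (hρ1 : ρ < 1)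
    (s s₀ : Finset (Fin p)) (hss : s ⊂ s₀) (β : Fin p → ℝ)
    (hsupp : ∀ j ∉ s₀, β j = 0) :
    let Sig : Matrix (Fin p) (Fin p) ℝ := Matrix.of fun i j => if i = j then 1 else ρ
    let Sss : Matrix {x // x ∈ s} {x // x ∈ s} ℝ := Matrix.of fun i j => Sig i.1 j.1
    let SsS : Matrix {x // x ∈ s} (Fin p) ℝ := Matrix.of fun i j => Sig i.1 j
    let Γ : Fin p → ℝ := fun j =>
      (fun k => Sig j k) ⬝ᵥ β - ((fun t : {x // x ∈ s} => Sig j t.1) ᵥ* (Sss⁻¹ * SsS)) ⬝ᵥ β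
    let b : ℝ := ρ * (1 - ρ) / (1 + ((s.card : ℝ) - 1) * ρ)
    (∀ j ∈ s₀ \ s, Γ j = b * (∑ k ∈ s₀ \ s, β k) + (1 - ρ) * β j) ∧
    (∀ j ∉ s₀, Γ j = b * (∑ k ∈ s₀ \ s, β k)) ∧
    ((∃ j ∈ s₀ \ s, β j ≠ 0) →
      ∀ j ∉ s₀,
        |Γ j| < (s₀ \ s).sup' (Finset.sdiff_nonempty.mpr hss.not_subset)
          fun k => |Γ k|) := by
  intro Sig Sss SsS Γ b
  have hΓ : ∀ j ∉ s, Γ j = b * ∑ k ∈ s₀ \ s, β k + (1 - ρ) * β j := fun j hj => by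
    rw [← sum_compl_eq_sum_sdiff hsupp]
    exact gamma_compoundSymm_of_notMem hρ.le hρ1 β hj
  have hΓout : ∀ j ∉ s₀, Γ j = b * ∑ k ∈ s₀ \ s, β k := fun j hj => by
    rw [hΓ j fun h => hj (hss.subset h), hsupp j hj, mul_zero, add_zero]
  refine ⟨fun j hj => hΓ j (mem_sdiff.1 hj).2, hΓout, fun hβ j hj => ?_⟩
  have hb : 0 < b := div_pos (mul_pos hρ (sub_pos.2 hρ1)) (one_add_sub_one_mul_pos _ hρ.le hρ1)
  obtain ⟨k, hk, hlt⟩ := exists_abs_lt_abs_mul_sum_add hb (sub_pos.2 hρ1) hβ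
  rw [hΓout j hj]
  exact hlt.trans_le (hΓ k (mem_sdiff.1 hk).2 ▸ le_sup' (fun k => |Γ k|) hk)
end

section
/- Let μ = Xβ with β supported on s₀, X(s₀) of full column rank, s ⊊ s₀, and suppose every column of X satisfies ‖X_j‖₂² = n. Then max_{j∈s₀∖s} (1/n)|X_jᵀ(I−H(s))μ| ≥ λ_min((1/n)X(s₀)ᵀX(s₀)) · min_{j∈s₀}|β_j|. -/
/-!
Let `r = (1 - H(s))μ` be the residual and `Δ = r ⬝ r`. Because `r ⟂ X_j` for `j ∈ s` and
`r = X(β - g)` with `g` supported on `s`, we get `Δ = ∑_{j ∈ s₀ \ s} β_j X_jᵀ r`, which is at most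
`‖β(s₀ \ s)‖₁ · max_{j ∈ s₀ \ s} |X_jᵀ r|`. On the other hand `r = X(s₀) c` with `c = β` on
`s₀ \ s`, so the Rayleigh bound gives `Δ ≥ n λ_min ‖c‖₂² ≥ n λ_min ‖β(s₀ \ s)‖₂²`, and
`‖v‖₂² ≥ (min_i |v_i|) ‖v‖₁`. Dividing by `n ‖β(s₀ \ s)‖₁` gives the claim; when that norm
vanishes, so does `min_{j ∈ s₀} |β_j|`.
-/

open Matrix

open scoped MatrixOrder in
theorem Matrix.IsHermitian.iInf_eigenvalues_mul_dotProduct_self_le {m : Type*} [Fintype m]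
    [DecidableEq m] {A : Matrix m m ℝ} (hA : A.IsHermitian) (c : m → ℝ) :
    (⨅ i, hA.eigenvalues i) * (c ⬝ᵥ c) ≤ c ⬝ᵥ (A *ᵥ c) := by
  have hle : algebraMap ℝ _ (⨅ i, hA.eigenvalues i) ≤ A := by
    rw [algebraMap_le_iff_le_spectrum hA.isSelfAdjoint, hA.spectrum_real_eq_range_eigenvalues]
    rintro _ ⟨i, rfl⟩
    exact ciInf_le (Finite.bddBelow_range _) i
  simpa [sub_mulVec, Algebra.algebraMap_eq_smul_one, smul_mulVec, dotProduct_sub] using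
    (le_iff.mp hle).dotProduct_mulVec_nonneg c

namespace Finset

variable {ι : Type*} {t : Finset ι}

theorem sum_mul_le_sum_abs_mul_sup' (ht : t.Nonempty) (a b f : ι → ℝ)
    (hb : ∀ j ∈ t, |b j| ≤ f j) :
    ∑ j ∈ t, a j * b j ≤ (∑ j ∈ t, |a j|) * t.sup' ht f := by
  rw [sum_mul]
  refine sum_le_sum fun j hj => ?_
  calc a j * b j ≤ |a j| * |b j| := by rw [← abs_mul]; exact le_abs_self _
    _ ≤ |a j| * t.sup' ht f :=
      mul_le_mul_of_nonneg_left ((hb j hj).trans (le_sup' f hj)) (abs_nonneg _)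

theorem mul_sum_abs_le_sum_sq {x : ι → ℝ} {m : ℝ} (hm : ∀ j ∈ t, m ≤ |x j|) :
    m * ∑ j ∈ t, |x j| ≤ ∑ j ∈ t, x j ^ 2 := by
  rw [mul_sum]
  refine sum_le_sum fun j hj => ?_
  calc m * |x j| ≤ |x j| * |x j| := mul_le_mul_of_nonneg_right (hm j hj) (abs_nonneg _)
    _ = x j ^ 2 := by rw [← sq, sq_abs]

theorem mul_le_of_mul_sum_sq_le_sum_abs_mul (ht : t.Nonempty) {x : ι → ℝ} {l m K : ℝ}
    (hl : 0 ≤ l) (hK : 0 ≤ K) (hm : ∀ j ∈ t, m ≤ |x j|)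
    (h : l * ∑ j ∈ t, x j ^ 2 ≤ (∑ j ∈ t, |x j|) * K) : l * m ≤ K := by
  obtain hzero | hpos := (sum_nonneg fun j _ => abs_nonneg (x j)).eq_or_lt
  · obtain ⟨j, hj⟩ := ht
    have hxj : |x j| = 0 := (sum_eq_zero_iff_of_nonneg fun j _ => abs_nonneg (x j)).mp
      hzero.symm j hj
    calc l * m ≤ l * |x j| := mul_le_mul_of_nonneg_left (hm j hj) hl
      _ = 0 := by rw [hxj, mul_zero]
      _ ≤ K := hK
  · refine le_of_mul_le_mul_right ?_ hpos
    calc l * m * ∑ j ∈ t, |x j| = l * (m * ∑ j ∈ t, |x j|) := mul_assoc _ _ _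
      _ ≤ l * ∑ j ∈ t, x j ^ 2 := mul_le_mul_of_nonneg_left (mul_sum_abs_le_sum_sq hm) hl
      _ ≤ K * ∑ j ∈ t, |x j| := h.trans_eq (mul_comm _ _)

end Finset

theorem Matrix.mulVec_eq_mulVec_restrict {m ι : Type*} [Fintype ι] (X : Matrix m ι ℝ)
    {t : Finset ι} {c : ι → ℝ} (hc : ∀ j ∉ t, c j = 0) :
    X *ᵥ c = (of fun i (k : t) => X i k) *ᵥ fun k => c k := by
  funext i
  simp only [mulVec, dotProduct, of_apply]
  rw [Finset.sum_coe_sort t fun j => X i j * c j]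
  exact (Finset.sum_subset (Finset.subset_univ t) fun j _ hj => by rw [hc j hj, mul_zero]).symm

theorem Matrix.mulVec_dotProduct_eq_sum {m ι : Type*} [Fintype m] [Fintype ι]
    (X : Matrix m ι ℝ) (c : ι → ℝ) (w : m → ℝ) :
    (X *ᵥ c) ⬝ᵥ w = ∑ j, c j * ((fun i => X i j) ⬝ᵥ w) := by
  rw [dotProduct_comm, dotProduct_mulVec]
  exact Finset.sum_congr rfl fun j _ => by rw [mul_comm, vecMul, dotProduct_comm]

theorem exists_proj_mulVec_eq_mulVec {n p : ℕ} (X : Matrix (Fin n) (Fin p) ℝ)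
    (s : Finset (Fin p)) (y : Fin n → ℝ) : ∃ g : Fin p → ℝ, (∀ j ∉ s, g j = 0) ∧ proj X s *ᵥ y = X *ᵥ g := by
  classical
  set Xs : Matrix (Fin n) s ℝ := of fun i k => X i k
  set a : s → ℝ := ((Xsᵀ * Xs)⁻¹ * Xsᵀ) *ᵥ y
  refine ⟨fun j => if h : j ∈ s then a ⟨j, h⟩ else 0, fun j hj => dif_neg hj, ?_⟩
  rw [X.mulVec_eq_mulVec_restrict (t := s) fun j hj => dif_neg hj]
  change (Xs * (Xsᵀ * Xs)⁻¹ * Xsᵀ) *ᵥ y = Xs *ᵥ fun k => dite _ _ _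
  simp only [Finset.coe_mem, dif_pos, Subtype.coe_eta]
  rw [Matrix.mul_assoc, ← mulVec_mulVec]

section Projection

variable {n p : ℕ} {X : Matrix (Fin n) (Fin p) ℝ} {s s₀ : Finset (Fin p)} {β : Fin p → ℝ}

theorem transpose_mul_proj
    (hranks : LinearIndependent ℝ fun k : {x // x ∈ s} => fun i => X i k.1) :
    (of fun i (k : s) => X i k)ᵀ * proj X s = (of fun i (k : s) => X i k)ᵀ := by
  set Xs : Matrix (Fin n) s ℝ := of fun i k => X i k
  have hunit : IsUnit (Xsᵀ * Xs) := by
    simpa using (PosDef.conjTranspose_mul_self Xs (mulVec_injective_iff.mpr hranks)).isUnit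
  change Xsᵀ * (Xs * (Xsᵀ * Xs)⁻¹ * Xsᵀ) = Xsᵀ
  rw [← Matrix.mul_assoc, ← Matrix.mul_assoc,
    mul_nonsing_inv _ ((isUnit_iff_isUnit_det _).mp hunit), Matrix.one_mul]

theorem col_dotProduct_sub_proj_mulVec_eq_zero
    (hranks : LinearIndependent ℝ fun k : {x // x ∈ s} => fun i => X i k.1) (y : Fin n → ℝ)
    {j : Fin p} (hj : j ∈ s) :
    (fun i => X i j) ⬝ᵥ ((1 - proj X s) *ᵥ y) = 0 := by
  have h := congrArg (fun M => (M *ᵥ y) ⟨j, hj⟩) (transpose_mul_proj hranks)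
  simp only [← mulVec_mulVec] at h
  rw [Matrix.sub_mulVec, one_mulVec, dotProduct_sub, sub_eq_zero]
  exact h.symm

theorem exists_residual_eq_mulVec (hss : s ⊆ s₀) (hsupp : ∀ j ∉ s₀, β j = 0) :
    ∃ c : Fin p → ℝ, (1 - proj X s) *ᵥ (X *ᵥ β) = X *ᵥ c ∧ (∀ j ∉ s₀, c j = 0) ∧
      ∀ j ∉ s, c j = β j := by
  obtain ⟨g, hg, hproj⟩ := exists_proj_mulVec_eq_mulVec X s (X *ᵥ β)
  refine ⟨β - g, ?_, fun j hj => ?_, fun j hj => ?_⟩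
  · rw [Matrix.sub_mulVec, one_mulVec, hproj, mulVec_sub]
  · rw [Pi.sub_apply, hsupp j hj, hg j fun h => hj (hss h), sub_zero]
  · rw [Pi.sub_apply, hg j hj, sub_zero]

theorem residual_dotProduct_self_eq_sum
    (hranks : LinearIndependent ℝ fun k : {x // x ∈ s} => fun i => X i k.1)
    (hss : s ⊆ s₀) (hsupp : ∀ j ∉ s₀, β j = 0) :
    let r := (1 - proj X s) *ᵥ (X *ᵥ β)
    r ⬝ᵥ r = ∑ j ∈ s₀ \ s, β j * ((fun i => X i j) ⬝ᵥ r) := by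
  intro r
  obtain ⟨c, hr, hc₀, hcs⟩ := exists_residual_eq_mulVec (X := X) hss hsupp
  have hkill : ∀ j ∉ s₀ \ s, c j * ((fun i => X i j) ⬝ᵥ r) = 0 := by
    intro j hj
    by_cases hjs : j ∈ s
    · rw [col_dotProduct_sub_proj_mulVec_eq_zero hranks _ hjs, mul_zero]
    · rw [hc₀ j fun h => hj (Finset.mem_sdiff.mpr ⟨h, hjs⟩), zero_mul]
  have hrc : r = X *ᵥ c := hr
  calc r ⬝ᵥ r = ∑ j, c j * ((fun i => X i j) ⬝ᵥ r) :=
        (congrArg (· ⬝ᵥ r) hrc).trans (X.mulVec_dotProduct_eq_sum c r)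
    _ = ∑ j ∈ s₀ \ s, c j * ((fun i => X i j) ⬝ᵥ r) :=
        (Finset.sum_subset (Finset.subset_univ _) fun j _ hj => hkill j hj).symm
    _ = ∑ j ∈ s₀ \ s, β j * ((fun i => X i j) ⬝ᵥ r) :=
        Finset.sum_congr rfl fun j hj => by rw [hcs j (Finset.mem_sdiff.mp hj).2]

theorem iInf_eigenvalues_mul_sum_sq_le_residual (hss : s ⊆ s₀) (hsupp : ∀ j ∉ s₀, β j = 0)
    (hG : ((n : ℝ)⁻¹ •
      ((of fun i (k : s₀) => X i k)ᵀ * of fun i (k : s₀) => X i k)).PosSemidef) :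
    let r := (1 - proj X s) *ᵥ (X *ᵥ β)
    (⨅ i, hG.1.eigenvalues i) * ∑ j ∈ s₀ \ s, β j ^ 2 ≤ (n : ℝ)⁻¹ * (r ⬝ᵥ r) := by
  intro r
  obtain ⟨c, hr, hc₀, hcs⟩ := exists_residual_eq_mulVec (X := X) hss hsupp
  set c₀ : s₀ → ℝ := fun k => c k
  have hrc : r = (of fun i (k : s₀) => X i k) *ᵥ c₀ := hr.trans (X.mulVec_eq_mulVec_restrict hc₀)
  have hβc : ∑ j ∈ s₀ \ s, β j ^ 2 ≤ c₀ ⬝ᵥ c₀ :=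
    calc ∑ j ∈ s₀ \ s, β j ^ 2 = ∑ j ∈ s₀ \ s, c j * c j :=
          Finset.sum_congr rfl fun j hj => by rw [hcs j (Finset.mem_sdiff.mp hj).2, sq]
      _ ≤ ∑ j ∈ s₀, c j * c j :=
          Finset.sum_le_sum_of_subset_of_nonneg Finset.sdiff_subset fun j _ _ => mul_self_nonneg _
      _ = c₀ ⬝ᵥ c₀ := (Finset.sum_coe_sort s₀ fun j => c j * c j).symm
  have hmin : 0 ≤ ⨅ i, hG.1.eigenvalues i := Real.iInf_nonneg hG.eigenvalues_nonneg
  calc (⨅ i, hG.1.eigenvalues i) * ∑ j ∈ s₀ \ s, β j ^ 2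
      ≤ (⨅ i, hG.1.eigenvalues i) * (c₀ ⬝ᵥ c₀) := mul_le_mul_of_nonneg_left hβc hmin
    _ ≤ _ := hG.1.iInf_eigenvalues_mul_dotProduct_self_le c₀
    _ = (n : ℝ)⁻¹ * (r ⬝ᵥ r) := by
        rw [smul_mulVec, dotProduct_smul, smul_eq_mul, ← mulVec_mulVec, dotProduct_mulVec,
          vecMul_transpose, hrc]

end Projection

/-- with `μ = Xβ`, `β` supported on `s₀`, `‖X_j‖₂² = n`, and `s ⊊ s₀`,
`max_{j∈s₀∖s} (1/n)|X_jᵀ(I−H(s))μ| ≥ λ_min((1/n)X(s₀)ᵀX(s₀)) · min_{j∈s₀}|β_j|`. -/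
theorem stmt17 {n p : ℕ} (X : Matrix (Fin n) (Fin p) ℝ)
    (s s₀ : Finset (Fin p)) (hss : s ⊂ s₀)
    (hranks : LinearIndependent ℝ fun k : {x // x ∈ s} => fun i => X i k.1)
    (β : Fin p → ℝ) (hsupp : ∀ j ∉ s₀, β j = 0) :
    let μ : Fin n → ℝ := X *ᵥ β
    let Xs₀ : Matrix (Fin n) {x // x ∈ s₀} ℝ := Matrix.of fun i k => X i k.1
    ∃ hG : (((n : ℝ)⁻¹) • (Xs₀ᵀ * Xs₀)).IsHermitian,
      (⨅ i, hG.eigenvalues i) *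
          s₀.inf'
            (by obtain ⟨x, hx⟩ := Finset.sdiff_nonempty.mpr hss.not_subset
                exact ⟨x, (Finset.mem_sdiff.mp hx).1⟩)
            (fun j => |β j|) ≤
        (s₀ \ s).sup' (Finset.sdiff_nonempty.mpr hss.not_subset)
          fun j => (1 / (n : ℝ)) * |(fun i => X i j) ⬝ᵥ ((1 - proj X s) *ᵥ μ)| := by
  intro μ Xs₀
  have hne : (s₀ \ s).Nonempty := Finset.sdiff_nonempty.mpr hss.not_subset
  have hG : ((n : ℝ)⁻¹ • (Xs₀ᵀ * Xs₀)).PosSemidef :=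
    (posSemidef_conjTranspose_mul_self Xs₀).smul (by positivity)
  refine ⟨hG.1, ?_⟩
  set r := (1 - proj X s) *ᵥ μ
  have hupper : (n : ℝ)⁻¹ * (r ⬝ᵥ r) ≤ (∑ j ∈ s₀ \ s, |β j|) *
      (s₀ \ s).sup' hne fun j => 1 / (n : ℝ) * |(fun i => X i j) ⬝ᵥ r| := by
    rw [residual_dotProduct_self_eq_sum hranks hss.subset hsupp, Finset.mul_sum]
    refine (Finset.sum_congr rfl fun j _ => by ring).trans_le
      (Finset.sum_mul_le_sum_abs_mul_sup' hne β (fun j => 1 / (n : ℝ) * ((fun i => X i j) ⬝ᵥ r))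
        _ fun j _ => ?_)
    rw [abs_mul, abs_of_nonneg (by positivity)]
  have hsup_nonneg : 0 ≤ (s₀ \ s).sup' hne fun j => 1 / (n : ℝ) * |(fun i => X i j) ⬝ᵥ r| :=
    hne.elim fun j hj => by
      refine le_trans ?_ (Finset.le_sup' (fun j => 1 / (n : ℝ) * |(fun i => X i j) ⬝ᵥ r|) hj)
      positivity
  exact Finset.mul_le_of_mul_sum_sq_le_sum_abs_mul hne (Real.iInf_nonneg hG.eigenvalues_nonneg)
    hsup_nonneg (fun j hj => Finset.inf'_le _ (Finset.mem_sdiff.mp hj).1)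
    ((iInf_eigenvalues_mul_sum_sq_le_residual hss.subset hsupp hG).trans hupper)
end
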